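/- arXiv:1802.00251 — 5 statements merged into one kernel-verified Lean document; each statement's English description precedes it below -/
import Mathlib

section
/- Let G be a {P5, K3}-free graph. Then each connected component of G is either bipartite or isomorphic to an independent expansion of C5 (i.e., obtained from C5 by replacing each vertex by a nonempty independent set and joining two such sets completely exactly when the corresponding vertices of C5 are adjacent). -/
/-!
A shortest odd closed walk in a triangle-free graph has no repeated vertex and no chord, so it
spans an induced odd cycle; triangle- and P5-freeness force its length to be 5. Call `v i` its
vertices. A vertex adjacent to the cycle but to no two vertices `v (j - 1)`, `v (j + 1)` would
start an induced P5 along the cycle, and so would a vertex adjacent to a common neighbour of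
`v (i - 1)` and `v (i + 1)` but to no cycle vertex. By connectivity, every vertex is therefore a
common neighbour of `v (i - 1)` and `v (i + 1)` for some `i`, unique by triangle-freeness, and two
such classes are completely joined exactly when their indices are adjacent in `C5`.
-/

open SimpleGraph Finset

/-- `G` contains an induced copy of `H`. -/
def HasInducedCopy {V W : Type*} (G : SimpleGraph V) (H : SimpleGraph W) : Prop :=
  ∃ f : W ↪ V, ∀ a b, G.Adj (f a) (f b) ↔ H.Adj a b

/-- The cycle on `ZMod n` (for `n ≥ 3`). -/
def cyc (n : ℕ) : SimpleGraph (ZMod n) where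
  Adj i j := i ≠ j ∧ (i = j + 1 ∨ j = i + 1)
  symm := ⟨fun i j h => ⟨h.1.symm, h.2.symm⟩⟩
  loopless := ⟨fun i h => h.1 rfl⟩

/-- Kite: diamond (K4 minus an edge) plus a pendant vertex adjacent to a degree-3 vertex. -/
def kite : SimpleGraph (Fin 5) :=
  SimpleGraph.fromEdgeSet {s(0,1), s(0,2), s(1,2), s(1,3), s(2,3), s(1,4)}

/-- Bull: triangle with two pendant edges at distinct vertices. -/
def bull : SimpleGraph (Fin 5) :=
  SimpleGraph.fromEdgeSet {s(0,1), s(0,2), s(1,2), s(0,3), s(1,4)}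

/-- Independent expansion of the cycle `C_n`. -/
def indExp (n : ℕ) (m : ZMod n → ℕ) : SimpleGraph (Σ i : ZMod n, Fin (m i)) where
  Adj x y := x.1 ≠ y.1 ∧ (x.1 = y.1 + 1 ∨ y.1 = x.1 + 1)
  symm := ⟨fun x y h => ⟨h.1.symm, h.2.symm⟩⟩
  loopless := ⟨fun x h => h.1 rfl⟩

/-- Complete expansion of the cycle `C_n`. -/
def compExp (n : ℕ) (m : ZMod n → ℕ) : SimpleGraph (Σ i : ZMod n, Fin (m i)) where
  Adj x y := (x.1 = y.1 ∧ x ≠ y) ∨ (x.1 ≠ y.1 ∧ (x.1 = y.1 + 1 ∨ y.1 = x.1 + 1))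
  symm := by
    constructor
    rintro x y (⟨h, hne⟩ | ⟨h, h2⟩)
    · exact Or.inl ⟨h.symm, hne.symm⟩
    · exact Or.inr ⟨h.symm, h2.symm⟩
  loopless := by constructor; rintro x (⟨_, hne⟩ | ⟨h, _⟩); exacts [hne rfl, h rfl]

/-- Distance from a vertex to a set of vertices. -/
noncomputable def distToSet {V : Type*} (G : SimpleGraph V) (S : Set V) (x : V) : ℕ :=
  sInf ((fun y => G.dist x y) '' S)

namespace SimpleGraph

variable {V W : Type*} {G : SimpleGraph V}

lemma hasInducedCopy_iff_isIndContained {H : SimpleGraph W} : HasInducedCopy G H ↔ H ⊴ G :=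
  ⟨fun ⟨f, hf⟩ => ⟨⟨f, hf _ _⟩⟩, fun ⟨f⟩ => ⟨f.toEmbedding, fun _ _ => f.map_rel_iff⟩⟩

lemma cliqueFree_three_of_not_hasInducedCopy (h : ¬HasInducedCopy G (⊤ : SimpleGraph (Fin 3))) :
    G.CliqueFree 3 :=
  not_not.1 fun hG => h (hasInducedCopy_iff_isIndContained.2 ⟨topEmbeddingOfNotCliqueFree hG⟩)

lemma not_adj_of_adj_of_adj (hK3 : G.CliqueFree 3) {a x y : V} (hx : G.Adj a x) (hy : G.Adj a y) :
    ¬G.Adj x y := by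
  classical
  exact fun hxy => hK3 _ (is3Clique_triple_iff.2 ⟨hx, hy, hxy⟩)

lemma isIndContained_of_adj_iff {H : SimpleGraph W} (f : W → V)
    (hf : ∀ a b, G.Adj (f a) (f b) ↔ H.Adj a b)
    (htwin : ∀ a b, (∀ c, H.Adj a c ↔ H.Adj b c) → a = b) : H ⊴ G :=
  ⟨⟨⟨f, fun a b hab => htwin a b fun c => by rw [← hf, ← hf, hab]⟩, hf _ _⟩⟩

lemma pathGraph_five_isIndContained {a b c d e : V} (hab : G.Adj a b) (hbc : G.Adj b c)
    (hcd : G.Adj c d) (hde : G.Adj d e) (hac : ¬G.Adj a c) (had : ¬G.Adj a d) (hae : ¬G.Adj a e)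
    (hbd : ¬G.Adj b d) (hbe : ¬G.Adj b e) (hce : ¬G.Adj c e) : pathGraph 5 ⊴ G := by
  refine isIndContained_of_adj_iff ![a, b, c, d, e] (fun i j => ?_)
    (by simp only [pathGraph_adj]; decide)
  fin_cases i <;> fin_cases j <;> simp [pathGraph_adj, G.adj_comm, *]

namespace Walk

def IsShortestOddLoop {u : V} (p : G.Walk u u) : Prop :=
  Odd p.length ∧ ∀ x (q : G.Walk x x), Odd q.length → p.length ≤ q.length

lemma exists_isShortestOddLoop (h : ∃ u, ∃ p : G.Walk u u, Odd p.length) :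
    ∃ u, ∃ p : G.Walk u u, p.IsShortestOddLoop := by
  classical
  have hn : ∃ n, ∃ u, ∃ p : G.Walk u u, Odd p.length ∧ p.length = n :=
    let ⟨u, p, hp⟩ := h; ⟨_, u, p, hp, rfl⟩
  obtain ⟨u, p, hodd, hlen⟩ := Nat.find_spec hn
  exact ⟨u, p, hodd, fun x q hq => hlen ▸ Nat.find_min' hn ⟨x, q, hq, rfl⟩⟩

variable {u : V} {p : G.Walk u u}

lemma IsShortestOddLoop.le_or_le (hp : p.IsShortestOddLoop) {a b : ℕ} (hab : a ≤ b)
    (hb : b ≤ p.length) (q : G.Walk (p.getVert b) (p.getVert a)) :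
    p.length ≤ b - a + q.length ∨ b - a ≤ q.length := by
  have hget : (p.drop a).getVert (b - a) = p.getVert b := by
    rw [drop_getVert, Nat.add_sub_cancel' hab]
  -- cutting `p` at positions `a` and `b` and closing both arcs with `q` gives two loops of total
  -- length `p.length + 2 * q.length`, so one of them is odd
  let r₁ := (((p.drop a).take (b - a)).copy rfl hget).append q
  let r₂ := q.reverse.append ((p.drop b).append (p.take a))
  have h₁ : r₁.length = b - a + q.length := by simp [r₁]; omega
  have h₂ : r₂.length = q.length + (p.length - b) + a := by simp [r₂]; omega
  have hsum : Odd (r₂.length + r₁.length) := by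
    rw [h₁, h₂, show q.length + (p.length - b) + a + (b - a + q.length) = p.length + 2 * q.length
      by omega]
    exact hp.1.add_even (even_two_mul _)
  rcases Nat.even_or_odd r₁.length with he | ho
  · have := hp.2 _ r₂ ((Nat.odd_add.1 hsum).2 he)
    omega
  · have := hp.2 _ r₁ ho
    omega

lemma IsShortestOddLoop.adj_getVert_iff (hp : p.IsShortestOddLoop) {a b : ℕ} (hab : a < b)
    (hb : b < p.length) :
    G.Adj (p.getVert a) (p.getVert b) ↔ b = a + 1 ∨ (a = 0 ∧ b = p.length - 1) := by
  refine ⟨fun h => ?_, ?_⟩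
  · have := hp.le_or_le hab.le hb.le h.symm.toWalk
    rw [Adj.length_toWalk] at this
    omega
  · rintro (rfl | ⟨rfl, rfl⟩)
    · exact p.adj_getVert_succ (by omega)
    · have := p.adj_getVert_succ (i := p.length - 1) (by omega)
      rw [Nat.sub_add_cancel (by omega), getVert_length] at this
      rw [getVert_zero]
      exact this.symm

lemma IsShortestOddLoop.length_eq_five (hK3 : G.CliqueFree 3) (hP5 : ¬pathGraph 5 ⊴ G)
    (hp : p.IsShortestOddLoop) : p.length = 5 := by
  obtain ⟨k, hk⟩ := hp.1
  have hsucc : ∀ a, a + 1 < p.length → G.Adj (p.getVert a) (p.getVert (a + 1)) :=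
    fun a h => p.adj_getVert_succ (by omega)
  have hne1 : p.length ≠ 1 := fun h => by
    have := p.adj_getVert_succ (i := 0) (by omega)
    rw [zero_add, show 1 = p.length from h.symm, getVert_length, getVert_zero] at this
    exact this.ne rfl
  have hne3 : p.length ≠ 3 := fun h =>
    not_adj_of_adj_of_adj hK3 (hsucc 0 (by omega)).symm (hsucc 1 (by omega))
      ((hp.adj_getVert_iff (by omega) (by omega)).2 (Or.inr ⟨rfl, by omega⟩))
  have hlt7 : p.length < 7 := by
    by_contra! h
    have hnadj : ∀ a b, a + 1 < b → b ≤ 4 → ¬G.Adj (p.getVert a) (p.getVert b) :=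
      fun a b hab hb hadj => by
        have := (hp.adj_getVert_iff (by omega) (by omega)).1 hadj
        omega
    exact hP5 (pathGraph_five_isIndContained (hsucc 0 (by omega)) (hsucc 1 (by omega))
      (hsucc 2 (by omega)) (hsucc 3 (by omega)) (hnadj 0 2 (by omega) (by omega))
      (hnadj 0 3 (by omega) (by omega)) (hnadj 0 4 (by omega) (by omega))
      (hnadj 1 3 (by omega) (by omega)) (hnadj 1 4 (by omega) (by omega))
      (hnadj 2 4 (by omega) (by omega)))
  omega

end Walk

instance (n : ℕ) : DecidableRel (cyc n).Adj :=
  fun i j => inferInstanceAs (Decidable (i ≠ j ∧ (i = j + 1 ∨ j = i + 1)))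

lemma exists_adj_iff_cyc_five (hK3 : G.CliqueFree 3) (hP5 : ¬pathGraph 5 ⊴ G)
    (hcol : ¬G.Colorable 2) : ∃ v : ZMod 5 → V, ∀ i j, G.Adj (v i) (v j) ↔ (cyc 5).Adj i j := by
  simp only [two_colorable_iff_forall_loop_even, not_forall, Nat.not_even_iff_odd] at hcol
  obtain ⟨u, p, hp⟩ := Walk.exists_isShortestOddLoop hcol
  have h5 := hp.length_eq_five hK3 hP5
  have hcyc : ∀ i j : ZMod 5, i.val < j.val →
      ((cyc 5).Adj i j ↔ j.val = i.val + 1 ∨ (i.val = 0 ∧ j.val = 5 - 1)) := by decide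
  have hlt : ∀ i j : ZMod 5, i.val < j.val →
      (G.Adj (p.getVert i.val) (p.getVert j.val) ↔ (cyc 5).Adj i j) := fun i j h => by
    rw [hp.adj_getVert_iff h (h5.symm ▸ j.val_lt), hcyc i j h, h5]
  refine ⟨fun i => p.getVert i.val, fun i j => ?_⟩
  rcases lt_trichotomy i.val j.val with h | h | h
  · exact hlt i j h
  · simp only [ZMod.val_injective _ h, G.irrefl, (cyc 5).irrefl]
  · rw [G.adj_comm, (cyc 5).adj_comm]
    exact hlt j i h

section CycleClasses

variable {v : ZMod 5 → V}

lemma apply_mem_commonNeighbors (hv : ∀ i j, G.Adj (v i) (v j) ↔ (cyc 5).Adj i j) (i : ZMod 5) :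
    v i ∈ G.commonNeighbors (v (i - 1)) (v (i + 1)) := by
  rw [mem_commonNeighbors, hv, hv]
  revert i
  decide

lemma eq_sub_one_or_eq_add_one_of_adj (hK3 : G.CliqueFree 3)
    (hv : ∀ i j, G.Adj (v i) (v j) ↔ (cyc 5).Adj i j) {x : V} {i j : ZMod 5}
    (hx : x ∈ G.commonNeighbors (v (i - 1)) (v (i + 1))) (hj : G.Adj (v j) x) :
    j = i - 1 ∨ j = i + 1 := by
  have h₁ := not_adj_of_adj_of_adj hK3 (G.mem_commonNeighbors.1 hx).1.symm hj.symm
  have h₂ := not_adj_of_adj_of_adj hK3 (G.mem_commonNeighbors.1 hx).2.symm hj.symm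
  rw [hv] at h₁ h₂
  clear hx hj
  revert i j
  decide

lemma eq_of_mem_commonNeighbors (hK3 : G.CliqueFree 3)
    (hv : ∀ i j, G.Adj (v i) (v j) ↔ (cyc 5).Adj i j) {x : V} {i k : ZMod 5}
    (hi : x ∈ G.commonNeighbors (v (i - 1)) (v (i + 1)))
    (hk : x ∈ G.commonNeighbors (v (k - 1)) (v (k + 1))) : i = k := by
  have h₁ := eq_sub_one_or_eq_add_one_of_adj hK3 hv hi (G.mem_commonNeighbors.1 hk).1
  have h₂ := eq_sub_one_or_eq_add_one_of_adj hK3 hv hi (G.mem_commonNeighbors.1 hk).2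
  clear hi hk
  revert i k
  decide

lemma exists_mem_commonNeighbors_of_adj (hK3 : G.CliqueFree 3) (hP5 : ¬pathGraph 5 ⊴ G)
    (hv : ∀ i j, G.Adj (v i) (v j) ↔ (cyc 5).Adj i j) {x : V} {j : ZMod 5} (hx : G.Adj (v j) x) :
    ∃ i, x ∈ G.commonNeighbors (v (i - 1)) (v (i + 1)) := by
  obtain ⟨h₀₁, h₁₂, h₂₃, h₀₂, h₀₃, h₁₃, e₁, e₂, e₃, e₄⟩ : G.Adj (v j) (v (j + 1)) ∧
      G.Adj (v (j + 1)) (v (j + 2)) ∧ G.Adj (v (j + 2)) (v (j + 3)) ∧ ¬G.Adj (v j) (v (j + 2)) ∧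
      ¬G.Adj (v j) (v (j + 3)) ∧ ¬G.Adj (v (j + 1)) (v (j + 3)) ∧
      j + 1 - 1 = j ∧ j + 1 + 1 = j + 2 ∧ j + 4 - 1 = j + 3 ∧ j + 4 + 1 = j := by
    simp only [hv]
    clear hx
    revert j
    decide
  by_cases hx₂ : G.Adj (v (j + 2)) x
  · exact ⟨j + 1, G.mem_commonNeighbors.2 ⟨by rwa [e₁], by rwa [e₂]⟩⟩
  by_cases hx₃ : G.Adj (v (j + 3)) x
  · exact ⟨j + 4, G.mem_commonNeighbors.2 ⟨by rwa [e₃], by rwa [e₄]⟩⟩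
  exact (hP5 (pathGraph_five_isIndContained hx.symm h₀₁ h₁₂ h₂₃
    (not_adj_of_adj_of_adj hK3 hx h₀₁) (hx₂ ·.symm) (hx₃ ·.symm) h₀₂ h₀₃ h₁₃)).elim

lemma exists_mem_commonNeighbors_of_adj_mem (hK3 : G.CliqueFree 3) (hP5 : ¬pathGraph 5 ⊴ G)
    (hv : ∀ i j, G.Adj (v i) (v j) ↔ (cyc 5).Adj i j) {x z : V} {i : ZMod 5}
    (hx : x ∈ G.commonNeighbors (v (i - 1)) (v (i + 1))) (hxz : G.Adj x z) :
    ∃ k, z ∈ G.commonNeighbors (v (k - 1)) (v (k + 1)) := by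
  by_cases hz : ∃ j, G.Adj (v j) z
  · obtain ⟨j, hj⟩ := hz
    exact exists_mem_commonNeighbors_of_adj hK3 hP5 hv hj
  simp only [not_exists] at hz
  obtain ⟨h₁₂, h₂₃, h₁₃, n₂, n₃⟩ : G.Adj (v (i + 1)) (v (i + 2)) ∧
      G.Adj (v (i + 2)) (v (i + 3)) ∧ ¬G.Adj (v (i + 1)) (v (i + 3)) ∧
      ¬(i + 2 = i - 1 ∨ i + 2 = i + 1) ∧ ¬(i + 3 = i - 1 ∨ i + 3 = i + 1) := by
    simp only [hv]
    clear hx hxz hz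
    revert i
    decide
  exact (hP5 (pathGraph_five_isIndContained hxz.symm (G.mem_commonNeighbors.1 hx).2.symm h₁₂ h₂₃
    (hz _ ·.symm) (hz _ ·.symm) (hz _ ·.symm)
    (fun h => n₂ (eq_sub_one_or_eq_add_one_of_adj hK3 hv hx h.symm))
    (fun h => n₃ (eq_sub_one_or_eq_add_one_of_adj hK3 hv hx h.symm)) h₁₃)).elim

lemma exists_mem_commonNeighbors (hconn : G.Connected) (hK3 : G.CliqueFree 3)
    (hP5 : ¬pathGraph 5 ⊴ G) (hv : ∀ i j, G.Adj (v i) (v j) ↔ (cyc 5).Adj i j) (x : V) :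
    ∃ i, x ∈ G.commonNeighbors (v (i - 1)) (v (i + 1)) := by
  induction (reachable_iff_reflTransGen (v 0) x).1 (hconn (v 0) x) with
  | refl => exact ⟨0, apply_mem_commonNeighbors hv 0⟩
  | tail _ hyz ih =>
    obtain ⟨i, hi⟩ := ih
    exact exists_mem_commonNeighbors_of_adj_mem hK3 hP5 hv hi hyz

lemma adj_of_mem_commonNeighbors_of_mem_commonNeighbors_add_one (hK3 : G.CliqueFree 3)
    (hP5 : ¬pathGraph 5 ⊴ G) (hv : ∀ i j, G.Adj (v i) (v j) ↔ (cyc 5).Adj i j) {x y : V}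
    {i : ZMod 5} (hx : x ∈ G.commonNeighbors (v (i - 1)) (v (i + 1)))
    (hy : y ∈ G.commonNeighbors (v (i + 1 - 1)) (v (i + 1 + 1))) : G.Adj x y := by
  by_contra hxy
  obtain ⟨h₀₁, n₀₃, n₁₃, e₁, e₂, n₁, n₂, n₃⟩ : G.Adj (v (i - 1)) (v i) ∧
      ¬G.Adj (v (i - 1)) (v (i + 2)) ∧ ¬G.Adj (v i) (v (i + 2)) ∧ i + 1 - 1 = i ∧
      i + 1 + 1 = i + 2 ∧ ¬(i = i - 1 ∨ i = i + 1) ∧ ¬(i + 2 = i - 1 ∨ i + 2 = i + 1) ∧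
      ¬(i - 1 = i + 1 - 1 ∨ i - 1 = i + 1 + 1) := by
    simp only [hv]
    clear hx hy hxy
    revert i
    decide
  obtain ⟨hy₁, hy₂⟩ := G.mem_commonNeighbors.1 hy
  rw [e₁] at hy₁
  rw [e₂] at hy₂
  exact hP5 (pathGraph_five_isIndContained (G.mem_commonNeighbors.1 hx).1.symm h₀₁ hy₁ hy₂.symm
    (fun h => n₁ (eq_sub_one_or_eq_add_one_of_adj hK3 hv hx h.symm)) hxy
    (fun h => n₂ (eq_sub_one_or_eq_add_one_of_adj hK3 hv hx h.symm))
    (fun h => n₃ (eq_sub_one_or_eq_add_one_of_adj hK3 hv hy h)) n₀₃ n₁₃)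

lemma adj_iff_of_mem_commonNeighbors (hK3 : G.CliqueFree 3) (hP5 : ¬pathGraph 5 ⊴ G)
    (hv : ∀ i j, G.Adj (v i) (v j) ↔ (cyc 5).Adj i j) {x y : V} {i k : ZMod 5}
    (hx : x ∈ G.commonNeighbors (v (i - 1)) (v (i + 1)))
    (hy : y ∈ G.commonNeighbors (v (k - 1)) (v (k + 1))) : G.Adj x y ↔ (cyc 5).Adj i k := by
  refine ⟨fun hxy => ?_, ?_⟩
  · have hne : ∀ a b, G.Adj (v a) x → G.Adj (v b) y → a ≠ b := by
      rintro a b ha hb rfl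
      exact not_adj_of_adj_of_adj hK3 ha hb hxy
    rw [G.mem_commonNeighbors] at hx hy
    have h₁ := hne _ _ hx.1 hy.1
    have h₂ := hne _ _ hx.1 hy.2
    have h₃ := hne _ _ hx.2 hy.1
    have h₄ := hne _ _ hx.2 hy.2
    clear hne hx hy
    revert i k
    decide
  · rintro ⟨-, rfl | rfl⟩
    · exact (adj_of_mem_commonNeighbors_of_mem_commonNeighbors_add_one hK3 hP5 hv hy hx).symm
    · exact adj_of_mem_commonNeighbors_of_mem_commonNeighbors_add_one hK3 hP5 hv hx hy

end CycleClasses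

lemma nonempty_iso_indExp_of_adj_iff [Finite W] {H : SimpleGraph W} {n : ℕ}
    (f : W → ZMod n) (hf : ∀ x y, H.Adj x y ↔ (cyc n).Adj (f x) (f y)) :
    Nonempty (H ≃g indExp n fun i => Nat.card {x // f x = i}) :=
  ⟨⟨(Equiv.sigmaFiberEquiv f).symm.trans (Equiv.sigmaCongrRight fun _ => Finite.equivFin _),
    (hf _ _).symm⟩⟩

theorem Connected.exists_iso_indExp_five [Finite W] {H : SimpleGraph W}
    (hconn : H.Connected) (hK3 : H.CliqueFree 3) (hP5 : ¬pathGraph 5 ⊴ H)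
    (hcol : ¬H.Colorable 2) :
    ∃ m : ZMod 5 → ℕ, (∀ i, 0 < m i) ∧ Nonempty (H ≃g indExp 5 m) := by
  obtain ⟨v, hv⟩ := exists_adj_iff_cyc_five hK3 hP5 hcol
  choose f hf using exists_mem_commonNeighbors hconn hK3 hP5 hv
  refine ⟨_, fun i => ?_, nonempty_iso_indExp_of_adj_iff f fun x y =>
    adj_iff_of_mem_commonNeighbors hK3 hP5 hv (hf x) (hf y)⟩
  have hvi : f (v i) = i :=
    eq_of_mem_commonNeighbors hK3 hv (hf (v i)) (apply_mem_commonNeighbors hv i)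
  exact Nat.card_pos_iff.2 ⟨⟨⟨v i, hvi⟩⟩, inferInstance⟩

end SimpleGraph

/-- Each connected component of a {P5, K3}-free graph is bipartite or an
independent expansion of C5. -/
theorem stmt_0 {V : Type*} [Fintype V] (G : SimpleGraph V)
    (hP5 : ¬ HasInducedCopy G (pathGraph 5))
    (hK3 : ¬ HasInducedCopy G (⊤ : SimpleGraph (Fin 3))) :
    ∀ c : G.ConnectedComponent,
      (G.induce c.supp).Colorable 2 ∨
      ∃ m : ZMod 5 → ℕ, (∀ i, 0 < m i) ∧ Nonempty (G.induce c.supp ≃g indExp 5 m) := by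
  intro c
  refine or_iff_not_imp_left.2 (c.connected_toSimpleGraph.exists_iso_indExp_five ?_ ?_)
  · exact (cliqueFree_three_of_not_hasInducedCopy hK3).comap (Embedding.induce _).isContained
  · exact fun h => hP5 (hasInducedCopy_iff_isIndContained.2 (h.trans ⟨Embedding.induce _⟩))
end

section
/- Let G be a connected {P5, K4, Kite, Bull}-free graph containing an induced 5-cycle with vertex set N0, and let B be the set of vertices at distance 1 from N0 adjacent to all five vertices of N0. Then B is an independent set. -/
open SimpleGraph Finset

theorem hasInducedCopy_top_of_not_cliqueFree {V : Type*} {G : SimpleGraph V} {n : ℕ}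
    (h : ¬ G.CliqueFree n) : HasInducedCopy G (⊤ : SimpleGraph (Fin n)) :=
  let f := topEmbeddingOfNotCliqueFree h
  ⟨f.toEmbedding, fun _ _ => f.map_adj_iff⟩

theorem not_cliqueFree_four_of_adj {V : Type*} {G : SimpleGraph V} {a b c d : V}
    (hab : G.Adj a b) (hac : G.Adj a c) (had : G.Adj a d) (hbc : G.Adj b c) (hbd : G.Adj b d)
    (hcd : G.Adj c d) : ¬ G.CliqueFree 4 := by
  classical
  exact fun h => h {a, b, c, d}
    ((is3Clique_triple_iff.2 ⟨hbc, hbd, hcd⟩).insert (by simp [hab, hac, had]))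

theorem stmt_3_general {V : Type*} (G : SimpleGraph V)
    (hK4 : ¬ HasInducedCopy G (⊤ : SimpleGraph (Fin 4)))
    (v : ZMod 5 → V)
    (hC : ∀ i j, G.Adj (v i) (v j) ↔ (cyc 5).Adj i j)
    (B : Set V) (hB : B = {x | x ∉ Set.range v ∧ ∀ i, G.Adj x (v i)}) :
    ∀ x ∈ B, ∀ y ∈ B, ¬ G.Adj x y := by
  subst hB
  rintro x ⟨-, hx⟩ y ⟨-, hy⟩ hxy
  have h01 : G.Adj (v 0) (v 1) := (hC 0 1).2 ⟨by decide, Or.inr rfl⟩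
  exact hK4 <| hasInducedCopy_top_of_not_cliqueFree <|
    not_cliqueFree_four_of_adj hxy (hx 0) (hx 1) (hy 0) (hy 1) h01

theorem stmt_3 {V : Type*} [Fintype V] (G : SimpleGraph V) (hconn : G.Connected)
    (hP5 : ¬ HasInducedCopy G (pathGraph 5))
    (hK4 : ¬ HasInducedCopy G (⊤ : SimpleGraph (Fin 4)))
    (hKite : ¬ HasInducedCopy G kite)
    (hBull : ¬ HasInducedCopy G bull)
    (v : ZMod 5 → V) (hinj : Function.Injective v)
    (hC : ∀ i j, G.Adj (v i) (v j) ↔ (cyc 5).Adj i j)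
    (B : Set V) (hB : B = {x | x ∉ Set.range v ∧ ∀ i, G.Adj x (v i)}) :
    ∀ x ∈ B, ∀ y ∈ B, ¬ G.Adj x y :=
  stmt_3_general G hK4 v hC B hB
end

section
/- Let G be a connected {P6, C5, K_{1,3}}-free graph containing an induced 6-cycle v0v1...v5, and for 0<=i<=5 let A_i = {v_i} ∪ {x : N(x) ∩ {v0,...,v5} = {v_{i-1}, v_i, v_{i+1}} (indices mod 6)}. Then each A_i induces a complete subgraph, [A_i, A_{i+1}] is complete, and [A_i, A_{i+2}] = [A_i, A_{i+3}] = ∅ for all i (indices mod 6); that is, A_0 ∪ ... ∪ A_5 induces a complete expansion of C6. -/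
open SimpleGraph Finset

/-!
Only the trace on the hexagon of a vertex of `A i` matters: it sees `v (i ± 1)` and no `v j`
outside `{v (i - 1), v i, v (i + 1)}`, and the same is true of `v i`. Rotating, we may take
`i = 0`, and each claim then exhibits a forbidden induced subgraph: two non-adjacent vertices
of `A 0` form a claw with `v 5` and `v 4`; non-adjacent `x ∈ A 0`, `y ∈ A 1` give the induced
path `y v₂ v₃ v₄ v₅ x`; adjacent `x ∈ A 0`, `y ∈ A 2` give the induced cycle `x y v₃ v₄ v₅`;
and adjacent `x ∈ A 0`, `y ∈ A 3` form a claw at `x` with `v 5` and `v 1`.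
-/

instance (n : ℕ) : DecidableRel (cyc n).Adj :=
  fun i j => inferInstanceAs (Decidable (i ≠ j ∧ (i = j + 1 ∨ j = i + 1)))

instance (n : ℕ) : DecidableRel (pathGraph n).Adj :=
  fun _ _ => decidable_of_iff _ pathGraph_adj.symm

section

variable {V W : Type*} {G : SimpleGraph V}

theorem cyc_adj_add_left {n : ℕ} (i a b : ZMod n) :
    (cyc n).Adj (i + a) (i + b) ↔ (cyc n).Adj a b := by
  simp only [cyc, ne_eq, add_assoc, add_right_inj]

theorem cyc_adj_iff {n : ℕ} {i j : ZMod n} (hij : j ≠ i) :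
    (cyc n).Adj i j ↔ (j = i + 1 ∨ j = i - 1) := by
  simp only [cyc, ne_eq, eq_sub_iff_add_eq]
  tauto

/-- `f` is injective because no two vertices of `H` have the same neighbourhood. -/
theorem hasInducedCopy_of_adj_iff {H : SimpleGraph W} (f : W → V)
    (hf : ∀ a b, G.Adj (f a) (f b) ↔ H.Adj a b)
    (hH : ∀ a b, (∀ c, H.Adj a c ↔ H.Adj b c) → a = b) : HasInducedCopy G H :=
  ⟨⟨f, fun a b hab => hH a b fun c => by rw [← hf, ← hf, hab]⟩, hf⟩

theorem adj_of_not_hasInducedCopy_claw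
    (hClaw : ¬HasInducedCopy G (completeBipartiteGraph (Fin 1) (Fin 3)))
    {c a b d : V} (ha : G.Adj c a) (hb : G.Adj c b) (hd : G.Adj c d)
    (hab : a ≠ b) (had : a ≠ d) (hbd : b ≠ d) : G.Adj a b ∨ G.Adj a d ∨ G.Adj b d := by
  by_contra! h
  obtain ⟨nab, nad, nbd⟩ := h
  have hinj : Function.Injective (Sum.elim (fun _ => c) ![a, b, d] : Fin 1 ⊕ Fin 3 → V) := by
    rintro (p | p) (q | q) h <;> fin_cases p <;> fin_cases q <;> simp_all [G.ne_of_adj]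
  refine hClaw ⟨⟨_, hinj⟩, ?_⟩
  rintro (p | p) (q | q) <;> fin_cases p <;> fin_cases q <;>
    simp_all [completeBipartiteGraph, G.adj_comm]

/-- Both `v i` and the vertices of `A i` are attached at `i`; nothing else about them is used. -/
def AttachedAt {n : ℕ} (G : SimpleGraph V) (v : ZMod n → V) (i : ZMod n) (x : V) : Prop :=
  ∀ j ≠ i, G.Adj x (v j) ↔ (j = i + 1 ∨ j = i - 1)

namespace AttachedAt

variable {n : ℕ} {v : ZMod n → V} {i j : ZMod n} {x : V}

theorem adj_iff (hx : AttachedAt G v i x) (hj : j ≠ i) :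
    G.Adj x (v j) ↔ (j = i + 1 ∨ j = i - 1) :=
  hx j hj

theorem adj_iff' (hx : AttachedAt G v i x) (hj : j ≠ i) :
    G.Adj (v j) x ↔ (j = i + 1 ∨ j = i - 1) :=
  G.adj_comm _ _ |>.trans (hx j hj)

theorem rotate {k : ZMod n} (hx : AttachedAt G v (i + k) x) :
    AttachedAt G (fun j => v (i + j)) k x := by
  intro j hj
  rw [hx.adj_iff ((add_right_injective i).ne hj), add_assoc, add_sub_assoc, add_right_inj,
    add_right_inj]

end AttachedAt

theorem attachedAt_of_mem_insert {n : ℕ} {v : ZMod n → V}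
    (hC : ∀ i j, G.Adj (v i) (v j) ↔ (cyc n).Adj i j) {i : ZMod n} {x : V}
    (hx : x ∈ insert (v i) {x | ∀ j, G.Adj x (v j) ↔ (j = i - 1 ∨ j = i ∨ j = i + 1)}) :
    AttachedAt G v i x := by
  rcases hx with rfl | hx
  · exact fun j hj => (hC i j).trans (cyc_adj_iff hj)
  · intro j hj
    rw [hx j]
    tauto

section Hexagon

variable {v : ZMod 6 → V} {x y : V}

theorem adj_of_attachedAt_zero
    (hClaw : ¬HasInducedCopy G (completeBipartiteGraph (Fin 1) (Fin 3)))
    (hC : ∀ i j, G.Adj (v i) (v j) ↔ (cyc 6).Adj i j)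
    (hx : AttachedAt G v 0 x) (hy : AttachedAt G v 0 y) (hxy : x ≠ y) : G.Adj x y := by
  have hx4 : ¬G.Adj x (v 4) := by rw [hx.adj_iff (by decide)]; decide
  have hy4 : ¬G.Adj y (v 4) := by rw [hy.adj_iff (by decide)]; decide
  have h41 : ¬G.Adj (v 4) (v 1) := by rw [hC]; decide
  have hx1 : G.Adj x (v 1) := by rw [hx.adj_iff (by decide)]; decide
  have hy1 : G.Adj y (v 1) := by rw [hy.adj_iff (by decide)]; decide
  obtain h | h | h := adj_of_not_hasInducedCopy_claw hClaw (c := v 5)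
    (by rw [hx.adj_iff' (by decide)]; decide) (by rw [hy.adj_iff' (by decide)]; decide)
    (by rw [hC]; decide) hxy (G.ne_of_adj_of_not_adj hx1 h41)
    (G.ne_of_adj_of_not_adj hy1 h41)
  exacts [h, absurd h hx4, absurd h hy4]

theorem adj_of_attachedAt_zero_one (hP6 : ¬HasInducedCopy G (pathGraph 6))
    (hC : ∀ i j, G.Adj (v i) (v j) ↔ (cyc 6).Adj i j)
    (hx : AttachedAt G v 0 x) (hy : AttachedAt G v 1 y) : G.Adj x y := by
  by_contra hxy
  refine hP6 (hasInducedCopy_of_adj_iff ![y, v 2, v 3, v 4, v 5, x] ?_ (by decide))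
  intro a b
  fin_cases a <;> fin_cases b <;>
    simp (disch := decide) [hC, hx.adj_iff, hx.adj_iff', hy.adj_iff, hy.adj_iff', hxy,
      G.adj_comm y x, pathGraph_adj] <;> decide

theorem not_adj_of_attachedAt_zero_two (hC5 : ¬HasInducedCopy G (cyc 5))
    (hC : ∀ i j, G.Adj (v i) (v j) ↔ (cyc 6).Adj i j)
    (hx : AttachedAt G v 0 x) (hy : AttachedAt G v 2 y) : ¬G.Adj x y := by
  intro hxy
  refine hC5 (hasInducedCopy_of_adj_iff ![x, y, v 3, v 4, v 5] ?_ (by decide))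
  have hcases : ∀ a : ZMod 5, a = 0 ∨ a = 1 ∨ a = 2 ∨ a = 3 ∨ a = 4 := by decide
  intro a b
  rcases hcases a with rfl | rfl | rfl | rfl | rfl <;>
    rcases hcases b with rfl | rfl | rfl | rfl | rfl <;>
    simp (disch := decide) [hC, hx.adj_iff, hx.adj_iff', hy.adj_iff, hy.adj_iff', hxy,
      hxy.symm] <;> decide

theorem not_adj_of_attachedAt_zero_three
    (hClaw : ¬HasInducedCopy G (completeBipartiteGraph (Fin 1) (Fin 3)))
    (hC : ∀ i j, G.Adj (v i) (v j) ↔ (cyc 6).Adj i j)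
    (hx : AttachedAt G v 0 x) (hy : AttachedAt G v 3 y) : ¬G.Adj x y := by
  intro hxy
  have hy5 : ¬G.Adj y (v 5) := by rw [hy.adj_iff (by decide)]; decide
  have hy1 : ¬G.Adj y (v 1) := by rw [hy.adj_iff (by decide)]; decide
  have h51 : ¬G.Adj (v 5) (v 1) := by rw [hC]; decide
  have hy2 : G.Adj y (v 2) := by rw [hy.adj_iff (by decide)]; decide
  have hy4 : G.Adj y (v 4) := by rw [hy.adj_iff (by decide)]; decide
  have h54 : G.Adj (v 5) (v 4) := by rw [hC]; decide
  have h52 : ¬G.Adj (v 5) (v 2) := by rw [hC]; decide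
  have h14 : ¬G.Adj (v 1) (v 4) := by rw [hC]; decide
  obtain h | h | h := adj_of_not_hasInducedCopy_claw hClaw (b := v 5) (d := v 1) hxy
    (by rw [hx.adj_iff (by decide)]; decide) (by rw [hx.adj_iff (by decide)]; decide)
    (G.ne_of_adj_of_not_adj hy2 h52) (G.ne_of_adj_of_not_adj hy4 h14)
    (G.ne_of_adj_of_not_adj h54 h14)
  exacts [hy5 h, hy1 h, h51 h]

end Hexagon

end

theorem stmt_7_general {V : Type*} (G : SimpleGraph V)
    (hP6 : ¬ HasInducedCopy G (pathGraph 6))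
    (hC5 : ¬ HasInducedCopy G (cyc 5))
    (hClaw : ¬ HasInducedCopy G (completeBipartiteGraph (Fin 1) (Fin 3)))
    (v : ZMod 6 → V)
    (hC : ∀ i j, G.Adj (v i) (v j) ↔ (cyc 6).Adj i j)
    (A : ZMod 6 → Set V)
    (hA : ∀ i, A i =
      insert (v i) {x | ∀ j, G.Adj x (v j) ↔ (j = i - 1 ∨ j = i ∨ j = i + 1)}) :
    ∀ i : ZMod 6,
      (∀ x ∈ A i, ∀ y ∈ A i, x ≠ y → G.Adj x y) ∧
      (∀ x ∈ A i, ∀ y ∈ A (i + 1), G.Adj x y) ∧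
      (∀ x ∈ A i, ∀ y ∈ A (i + 2), ¬ G.Adj x y) ∧
      (∀ x ∈ A i, ∀ y ∈ A (i + 3), ¬ G.Adj x y) := by
  intro i
  -- by rotating the hexagon we may take `i = 0`
  have hCi : ∀ a b, G.Adj (v (i + a)) (v (i + b)) ↔ (cyc 6).Adj a b :=
    fun a b => (hC _ _).trans (cyc_adj_add_left i a b)
  have hAi : ∀ k, ∀ x ∈ A (i + k), AttachedAt G (fun j => v (i + j)) k x :=
    fun k x hx => (attachedAt_of_mem_insert hC (hA _ ▸ hx)).rotate
  have hA0 : ∀ x ∈ A i, AttachedAt G (fun j => v (i + j)) 0 x :=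
    fun x hx => hAi 0 x (by rwa [add_zero])
  exact ⟨fun x hx y hy => adj_of_attachedAt_zero hClaw hCi (hA0 x hx) (hA0 y hy),
    fun x hx y hy => adj_of_attachedAt_zero_one hP6 hCi (hA0 x hx) (hAi 1 y hy),
    fun x hx y hy => not_adj_of_attachedAt_zero_two hC5 hCi (hA0 x hx) (hAi 2 y hy),
    fun x hx y hy => not_adj_of_attachedAt_zero_three hClaw hCi (hA0 x hx) (hAi 3 y hy)⟩

theorem stmt_7 {V : Type*} [Fintype V] (G : SimpleGraph V) (hconn : G.Connected)
    (hP6 : ¬ HasInducedCopy G (pathGraph 6))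
    (hC5 : ¬ HasInducedCopy G (cyc 5))
    (hClaw : ¬ HasInducedCopy G (completeBipartiteGraph (Fin 1) (Fin 3)))
    (v : ZMod 6 → V) (hinj : Function.Injective v)
    (hC : ∀ i j, G.Adj (v i) (v j) ↔ (cyc 6).Adj i j)
    (A : ZMod 6 → Set V)
    (hA : ∀ i, A i =
      insert (v i) {x | ∀ j, G.Adj x (v j) ↔ (j = i - 1 ∨ j = i ∨ j = i + 1)}) :
    ∀ i : ZMod 6,
      (∀ x ∈ A i, ∀ y ∈ A i, x ≠ y → G.Adj x y) ∧
      (∀ x ∈ A i, ∀ y ∈ A (i + 1), G.Adj x y) ∧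
      (∀ x ∈ A i, ∀ y ∈ A (i + 2), ¬ G.Adj x y) ∧
      (∀ x ∈ A i, ∀ y ∈ A (i + 3), ¬ G.Adj x y) :=
  stmt_7_general G hP6 hC5 hClaw v hC A hA
end

section
/- Let G be a connected {P5, K4, Kite, Bull}-free graph containing an induced 5-cycle with vertex set N0, and let N_i denote the set of vertices at distance i from N0. Then N_i = ∅ for all i >= 4. -/
/-! A shortest walk is an induced path, so a connected `P₅`-free graph has diameter at most `3`;
in particular no vertex lies at distance `4` or more from the `5`-cycle. -/

open SimpleGraph Finset

namespace SimpleGraph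

variable {V : Type*} {G : SimpleGraph V} {u v : V}

lemma Walk.dist_getVert_getVert_of_length_eq_dist {p : G.Walk u v} (hp : p.length = G.dist u v)
    {i j : ℕ} (hij : i ≤ j) (hj : j ≤ p.length) :
    G.dist (p.getVert i) (p.getVert j) = j - i := by
  have hsub : ((p.take j).drop i).IsSubwalk p := (isSubwalk_drop _ i).trans (p.isSubwalk_take j)
  have h := length_eq_dist_of_subwalk hp hsub
  simp only [drop_length, take_length, take_getVert, min_eq_right hij, min_eq_left hj] at h
  exact h.symm

lemma Reachable.hasInducedCopy_pathGraph_of_le_dist (hr : G.Reachable u v) {n : ℕ}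
    (hn : n ≤ G.dist u v) : HasInducedCopy G (pathGraph (n + 1)) := by
  obtain ⟨p, hp⟩ := hr.exists_walk_length_eq_dist
  have hdist (a b : Fin (n + 1)) :
      G.dist (p.getVert a) (p.getVert b) = max (a : ℕ) b - min (a : ℕ) b := by
    rcases le_total (a : ℕ) b with hab | hba
    · rw [max_eq_right hab, min_eq_left hab]
      exact p.dist_getVert_getVert_of_length_eq_dist hp hab (by omega)
    · rw [dist_comm, max_eq_left hba, min_eq_right hba]
      exact p.dist_getVert_getVert_of_length_eq_dist hp hba (by omega)
  have hinj : Function.Injective fun a : Fin (n + 1) => p.getVert a := fun a b hab => by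
    have := hdist a b
    simp only [hab, dist_self] at this
    omega
  refine ⟨⟨_, hinj⟩, fun a b => ?_⟩
  change G.Adj (p.getVert a) (p.getVert b) ↔ _
  rw [← dist_eq_one_iff_adj, hdist, pathGraph_adj]
  omega

lemma Connected.dist_le_three_of_not_hasInducedCopy_pathGraph (hconn : G.Connected)
    (hP5 : ¬ HasInducedCopy G (pathGraph 5)) (u v : V) : G.dist u v ≤ 3 := by
  by_contra! h
  exact hP5 ((hconn u v).hasInducedCopy_pathGraph_of_le_dist h)

end SimpleGraph

lemma distToSet_le_dist {V : Type*} (G : SimpleGraph V) {S : Set V} {y : V} (hy : y ∈ S) (x : V) :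
    distToSet G S x ≤ G.dist x y :=
  Nat.sInf_le ⟨y, hy, rfl⟩

theorem stmt_17_general {V : Type*} (G : SimpleGraph V) (hconn : G.Connected)
    (hP5 : ¬ HasInducedCopy G (pathGraph 5))
    (v : ZMod 5 → V) :
    ∀ i : ℕ, 4 ≤ i → {x | distToSet G (Set.range v) x = i} = ∅ := by
  intro i hi
  refine Set.eq_empty_of_forall_notMem fun x hx => ?_
  have := (distToSet_le_dist G (Set.mem_range_self 0) x).trans
    (hconn.dist_le_three_of_not_hasInducedCopy_pathGraph hP5 x (v 0))
  rw [Set.mem_ofPred_eq.mp hx] at this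
  omega

theorem stmt_17 {V : Type*} [Fintype V] (G : SimpleGraph V) (hconn : G.Connected)
    (hP5 : ¬ HasInducedCopy G (pathGraph 5))
    (hK4 : ¬ HasInducedCopy G (⊤ : SimpleGraph (Fin 4)))
    (hKite : ¬ HasInducedCopy G kite)
    (hBull : ¬ HasInducedCopy G bull)
    (v : ZMod 5 → V) (hinj : Function.Injective v)
    (hC : ∀ i j, G.Adj (v i) (v j) ↔ (cyc 5).Adj i j) :
    ∀ i : ℕ, 4 ≤ i → {x | distToSet G (Set.range v) x = i} = ∅ :=
  stmt_17_general G hconn hP5 v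
end

section
/- Let G be a connected {P5, (P2 ∪ P3)-complement, P5-complement, Dart}-free graph that contains an induced 5-cycle C on vertices v0,...,v4, and suppose G = C5(S1,...,S5) + H for some nonempty induced subgraph H (i.e., every vertex of H is adjacent to every vertex outside H). Then H induces a complete graph. -/
open SimpleGraph Finset

/-- Complement of the disjoint union of P2 and P3. -/
def p2p3Compl : SimpleGraph (Fin 5) :=
  (SimpleGraph.fromEdgeSet {s(0,1), s(2,3), s(3,4)})ᶜ

/-- Dart: diamond (K4 minus an edge) plus a pendant vertex adjacent to a degree-3 vertex. -/
def dart : SimpleGraph (Fin 5) :=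
  SimpleGraph.fromEdgeSet {s(0,1), s(0,2), s(1,2), s(1,3), s(2,3), s(1,4)}

/- Two nonadjacent vertices `x, y` that both see an edge `ab` and a vertex `c` missing that edge
induce, together with `a, b, c`, the complement of `P₂ ∪ P₃`: its non-edges are `xy`, `ac`, `cb`.
In `C₅` the vertices `v₀, v₁, v₃` are such an edge and vertex, and every vertex of `H` sees all of
them. -/

theorem hasInducedCopy_p2p3Compl {V : Type*} {G : SimpleGraph V} {x y a b c : V} (hxy : x ≠ y)
    (hnxy : ¬ G.Adj x y) (hab : G.Adj a b) (hac : ¬ G.Adj a c) (hbc : ¬ G.Adj b c)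
    (hx : ∀ z ∈ ({a, b, c} : Set V), G.Adj x z) (hy : ∀ z ∈ ({a, b, c} : Set V), G.Adj y z) :
    HasInducedCopy G p2p3Compl := by
  simp only [Set.mem_insert_iff, Set.mem_singleton_iff, forall_eq_or_imp, forall_eq] at hx hy
  obtain ⟨hxa, hxb, hxc⟩ := hx
  obtain ⟨hya, hyb, hyc⟩ := hy
  have hca : c ≠ a := fun h => hbc (h ▸ hab.symm)
  have hcb : c ≠ b := fun h => hac (h ▸ hab)
  have f_inj : Function.Injective ![x, y, a, c, b] := by
    intro i j h
    fin_cases i <;> fin_cases j <;>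
      simp_all [hxa.ne, hxb.ne, hxc.ne, hya.ne, hyb.ne, hyc.ne, hab.ne, eq_comm]
  refine ⟨⟨_, f_inj⟩, fun i j => ?_⟩
  fin_cases i <;> fin_cases j <;>
    simp [p2p3Compl, Sym2.eq, Sym2.rel_iff', hnxy, hab, hac, hbc, hxa, hxb, hxc, hya, hyb, hyc,
      hxa.symm, hxb.symm, hxc.symm, hya.symm, hyb.symm, hyc.symm, hab.symm, G.adj_comm y x,
      G.adj_comm c a, G.adj_comm c b]

theorem stmt_18_general {V : Type*} (G : SimpleGraph V)
    (hP2P3c : ¬ HasInducedCopy G p2p3Compl)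
    (v : ZMod 5 → V)
    (hC : ∀ i j, G.Adj (v i) (v j) ↔ (cyc 5).Adj i j)
    (H : Set V)
    (hjoin : ∀ x ∈ H, ∀ y, y ∉ H → G.Adj x y)
    (hvH : ∀ i, v i ∉ H) :
    ∀ x ∈ H, ∀ y ∈ H, x ≠ y → G.Adj x y := by
  intro x hx y hy hxy
  by_contra hnxy
  have hsees : ∀ u ∈ H, ∀ z ∈ ({v 0, v 1, v 3} : Set V), G.Adj u z := by
    rintro u hu z (rfl | rfl | rfl) <;> exact hjoin u hu _ (hvH _)
  exact hP2P3c <| hasInducedCopy_p2p3Compl hxy hnxy ((hC 0 1).2 (by unfold cyc; decide))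
    (mt (hC 0 3).1 (by unfold cyc; decide)) (mt (hC 1 3).1 (by unfold cyc; decide))
    (hsees x hx) (hsees y hy)

theorem stmt_18 {V : Type*} [Fintype V] (G : SimpleGraph V) (hconn : G.Connected)
    (hP5 : ¬ HasInducedCopy G (pathGraph 5))
    (hP2P3c : ¬ HasInducedCopy G p2p3Compl)
    (hP5c : ¬ HasInducedCopy G (pathGraph 5)ᶜ)
    (hDart : ¬ HasInducedCopy G dart)
    (v : ZMod 5 → V) (hinj : Function.Injective v)
    (hC : ∀ i j, G.Adj (v i) (v j) ↔ (cyc 5).Adj i j)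
    (H : Set V) (hHne : H.Nonempty)
    (hjoin : ∀ x ∈ H, ∀ y, y ∉ H → G.Adj x y)
    (hvH : ∀ i, v i ∉ H) :
    ∀ x ∈ H, ∀ y ∈ H, x ≠ y → G.Adj x y :=
  stmt_18_general G hP2P3c v hC H hjoin hvH
end
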